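/- Let n ≥ 1 and let λ be a Lyndon word over Σ of length d, where d divides n. Then the number of words x of length n over Σ with minrot(x) = λ^(n/d) is exactly d. -/

import Mathlib

namespace Lyndon

variable {α : Type*}

/-- `rot w c` is the cyclic rotation of `w` obtained by moving its first `c mod |w|`
letters to the end. -/
def rot (w : List α) (c : ℕ) : List α :=
  w.drop (c % w.length) ++ w.take (c % w.length)

/-- `power w k` is the concatenation of `k` copies of `w`. -/
def power (w : List α) (k : ℕ) : List α := (List.replicate k w).flatten

/-- `minrot w` is the lexicographically minimal cyclic rotation of `w`. -/
def minrot [LinearOrder α] (w : List α) : List α :=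
  ((List.range w.length).map (rot w)).foldr min w

/-- A word is self-minimal if it equals its minimal cyclic rotation. -/
def SelfMinimal [LinearOrder α] (w : List α) : Prop := minrot w = w

/-- A word is primitive if it is a `k`-th power (for a positive integer `k`)
only of itself. -/
def Primitive (w : List α) : Prop :=
  ∀ (u : List α) (k : ℕ), 0 < k → w = power u k → u = w

/-- A Lyndon word is a nonempty word that is primitive and self-minimal. -/
def IsLyndon [LinearOrder α] (w : List α) : Prop :=
  w ≠ [] ∧ Primitive w ∧ SelfMinimal w

/-- `Pref₋(w)`: the words `w_(i)·s` for `0 ≤ i ≤ n-1` and a letter `s < w[i+1]`,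
together with `w` itself. -/
def PrefMinus [LinearOrder α] (w : List α) : Set (List α) :=
  {y | (∃ i : Fin w.length, ∃ s : α, s < w.get i ∧ y = w.take i ++ [s]) ∨ y = w}

/-- `L(w)`: the words containing a factor (contiguous subword) from `Pref₋(w)`. -/
def InL [LinearOrder α] (w x : List α) : Prop :=
  ∃ y ∈ PrefMinus w, y <:+: x

/-!
The words of length `n` whose minimal rotation is `w = λ^(n/d)` are exactly the rotations of `w`,
because `w` is self-minimal along with `λ`. These rotations form the orbit of `w` under the
one-letter rotation, so there are as many of them as its minimal period `p`. Since `w` is fixed by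
rotation through `d`, `p ∣ d`, and rotating `w` through `p` rotates each copy of `λ` through `p`;
a word fixed by rotation through a divisor `p` of its length is `(λ_(p))^(d/p)`, so primitivity
of `λ` forces `p = d`.
-/

open Function

section foldrMin

variable {β : Type*} [LinearOrder β]

lemma foldr_min_le_of_mem (b : β) {a : β} {L : List β} (h : a ∈ L) : L.foldr min b ≤ a := by
  induction L with
  | nil => simp at h
  | cons c L ih =>
    rcases List.mem_cons.1 h with rfl | h
    · exact min_le_left _ _
    · exact (min_le_right _ _).trans (ih h)

lemma foldr_min_mem (b : β) (L : List β) : L.foldr min b ∈ b :: L := by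
  induction L with
  | nil => simp
  | cons c L ih =>
    rw [List.foldr_cons]
    rcases min_choice c (L.foldr min b) with h | h <;> rw [h]
    · simp
    · rcases List.mem_cons.1 ih with h' | h' <;> simp [h']

end foldrMin

lemma rot_eq_rotate (w : List α) (c : ℕ) : rot w c = w.rotate c := by
  rcases eq_or_ne w [] with rfl | hw
  · simp [rot]
  · rw [rot, ← List.rotate_mod,
      List.rotate_eq_drop_append_take (Nat.mod_lt _ (List.length_pos_iff.2 hw)).le]

lemma iterate_rotate_one (w : List α) (k : ℕ) : (·.rotate 1)^[k] w = w.rotate k := by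
  induction k with
  | zero => simp
  | succ k ih => rw [iterate_succ_apply', ih, List.rotate_rotate]

lemma minimalPeriod_rotate_one_pos (w : List α) : 0 < minimalPeriod (·.rotate 1) w := by
  rcases w with _ | ⟨a, w⟩
  · exact IsPeriodicPt.minimalPeriod_pos one_pos (by simp [IsPeriodicPt, IsFixedPt])
  · refine IsPeriodicPt.minimalPeriod_pos (n := (a :: w).length) (by simp) ?_
    rw [IsPeriodicPt, IsFixedPt, iterate_rotate_one, List.rotate_length]

lemma ncard_setOf_isRotated (w : List α) :
    {x | x ~r w}.ncard = minimalPeriod (·.rotate 1) w := by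
  have horbit : {x | x ~r w} =
      (fun k => (·.rotate 1)^[k] w) '' Set.Iio (minimalPeriod (·.rotate 1) w) := by
    ext x
    simp only [Set.mem_ofPred_eq, Set.mem_image, Set.mem_Iio, List.isRotated_comm (l := x)]
    constructor
    · rintro ⟨k, rfl⟩
      exact ⟨k % _, Nat.mod_lt _ (minimalPeriod_rotate_one_pos w), by
        rw [iterate_mod_minimalPeriod_eq, iterate_rotate_one]⟩
    · rintro ⟨k, -, rfl⟩
      exact ⟨k, (iterate_rotate_one w k).symm⟩
  rw [horbit, iterate_injOn_Iio_minimalPeriod.ncard_image, Set.ncard_Iio_nat]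

section minrot

variable [LinearOrder α]

lemma minrot_le_rotate (w : List α) (c : ℕ) : minrot w ≤ w.rotate c := by
  rcases eq_or_ne w [] with rfl | hw
  · simp [minrot]
  rw [← List.rotate_mod, ← rot_eq_rotate]
  exact foldr_min_le_of_mem _
    (List.mem_map_of_mem (List.mem_range.2 (Nat.mod_lt _ (List.length_pos_iff.2 hw))))

lemma minrot_isRotated (w : List α) : minrot w ~r w := by
  rcases List.mem_cons.1 (foldr_min_mem w ((List.range w.length).map (rot w))) with h | h
  · rw [minrot, h]
  · obtain ⟨c, -, hc⟩ := List.mem_map.1 h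
    rw [minrot, ← hc, rot_eq_rotate]
    exact List.IsRotated.forall w c

lemma minrot_le_of_isRotated {x y : List α} (h : x ~r y) : minrot x ≤ y := by
  obtain ⟨c, rfl⟩ := h
  exact minrot_le_rotate x c

lemma minrot_eq_iff_isRotated {x w : List α} (hw : SelfMinimal w) : minrot x = w ↔ x ~r w := by
  constructor
  · rintro rfl
    exact (minrot_isRotated x).symm
  · intro h
    refine le_antisymm (minrot_le_of_isRotated h) ?_
    calc w = minrot w := hw.symm
      _ ≤ minrot x := minrot_le_of_isRotated (h.symm.trans (minrot_isRotated x).symm)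

end minrot

lemma power_succ (u : List α) (k : ℕ) : power u (k + 1) = u ++ power u k := by
  simp [power, List.replicate_succ]

lemma length_power (u : List α) (k : ℕ) : (power u k).length = k * u.length := by
  simp [power]

lemma getElem_power {u : List α} {k i : ℕ} (h : i < (power u k).length) :
    (power u k)[i] = u[i % u.length]'(Nat.mod_lt _ (by
      rw [length_power] at h; exact Nat.pos_of_ne_zero fun h0 => by simp [h0] at h)) := by
  induction k generalizing i with
  | zero => simp [length_power] at h
  | succ k ih =>
    simp only [power_succ, List.getElem_append]
    split_ifs with hi
    · simp only [Nat.mod_eq_of_lt hi]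
    · simp only [ih, ← Nat.mod_eq_sub_mod (not_lt.1 hi)]

lemma rotate_power (u : List α) (k r : ℕ) : (power u k).rotate r = power (u.rotate r) k :=
  List.ext_getElem (by simp [length_power]) fun i _ _ => by
    simp [getElem_power, length_power, Nat.mod_mod_of_dvd _ (dvd_mul_left u.length k)]

lemma eq_of_power_eq {u v : List α} {k : ℕ} (hk : 0 < k) (hlen : u.length = v.length)
    (h : power u k = power v k) : u = v := by
  obtain ⟨k, rfl⟩ := Nat.exists_eq_add_of_lt hk
  rw [power_succ, power_succ] at h
  exact List.append_inj_left h hlen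

lemma eq_power_take_of_rotate_eq {w : List α} {p : ℕ} (h : w.rotate p = w) (hp : p ∣ w.length) :
    w = power (w.take p) (w.length / p) := by
  rcases Nat.eq_zero_or_pos w.length with hL | hL
  · simp [List.length_eq_zero_iff.1 hL, power]
  have hpL : p ≤ w.length := Nat.le_of_dvd hL hp
  set f : ℕ → α := fun j => w[j % w.length]'(Nat.mod_lt _ hL)
  have hf : Periodic f p := fun j => by
    have hj : j % w.length < (w.rotate p).length := by simpa using Nat.mod_lt _ hL
    simpa [f] using (List.getElem_rotate w p _ hj).symm.trans (List.getElem_of_eq h hj)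
  refine List.ext_getElem (by simp [length_power, hpL, Nat.div_mul_cancel hp]) fun i hi _ => ?_
  have hip : i % p < w.length := (Nat.mod_lt _ (Nat.pos_of_dvd_of_pos hp hL)).trans_le hpL
  simpa [f, getElem_power, hpL, Nat.mod_eq_of_lt hi, Nat.mod_eq_of_lt hip] using
    (hf.map_mod_nat i).symm

lemma minimalPeriod_rotate_power {u : List α} (hu : Primitive u) (hne : u ≠ []) {k : ℕ}
    (hk : 0 < k) : minimalPeriod (·.rotate 1) (power u k) = u.length := by
  have hL : 0 < u.length := List.length_pos_iff.2 hne
  have hper : IsPeriodicPt (·.rotate 1) u.length (power u k) := by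
    rw [IsPeriodicPt, IsFixedPt, iterate_rotate_one, rotate_power, List.rotate_length]
  set p := minimalPeriod (·.rotate 1) (power u k)
  have hpu : p ∣ u.length := hper.minimalPeriod_dvd
  have hrot : u.rotate p = u := by
    refine eq_of_power_eq hk (List.length_rotate u p) ?_
    rw [← rotate_power, ← iterate_rotate_one, iterate_minimalPeriod]
  have htake : u.take p = u :=
    hu _ _ (Nat.div_pos (Nat.le_of_dvd hL hpu) (hper.minimalPeriod_pos hL))
      (eq_power_take_of_rotate_eq hrot hpu)
  have hLp : u.length ≤ p := by simpa using congrArg List.length htake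
  exact le_antisymm (Nat.le_of_dvd hL hpu) hLp

lemma lex_append_of_length_eq {r : α → α → Prop} {a b : List α} (hab : List.Lex r a b)
    (hlen : a.length = b.length) (x y : List α) : List.Lex r (a ++ x) (b ++ y) := by
  induction hab with
  | nil => simp at hlen
  | rel h => exact List.Lex.rel h
  | cons _ ih => exact List.Lex.cons (ih (by simpa using hlen))

section order

variable [LinearOrder α]

lemma power_le_power {u v : List α} (huv : u ≤ v) (hlen : u.length = v.length) (k : ℕ) :
    power u k ≤ power v k := by
  rcases huv.eq_or_lt with rfl | hlt
  · exact le_rfl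
  cases k with
  | zero => exact le_rfl
  | succ k =>
    rw [power_succ, power_succ]
    exact le_of_lt (lex_append_of_length_eq hlt hlen _ _)

lemma selfMinimal_power {u : List α} (hu : SelfMinimal u) (k : ℕ) : SelfMinimal (power u k) := by
  refine le_antisymm (by simpa using minrot_le_rotate (power u k) 0) ?_
  obtain ⟨c, hc⟩ := (minrot_isRotated (power u k)).symm
  rw [← hc, rotate_power]
  have hle : u ≤ u.rotate c := hu.symm.le.trans (minrot_le_rotate u c)
  exact power_le_power hle (List.length_rotate u c).symm k

end order

theorem stmt_17_general [LinearOrder α]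
    (n d : ℕ) (hn : 1 ≤ n) (l : List α) (hl : IsLyndon l)
    (hld : l.length = d) (hd : d ∣ n) :
    {x : List α | x.length = n ∧ minrot x = power l (n / d)}.ncard = d := by
  subst hld
  obtain ⟨hne, hprim, hsm⟩ := hl
  have hk : 0 < n / l.length := Nat.div_pos (Nat.le_of_dvd hn hd) (List.length_pos_iff.2 hne)
  have hlen : (power l (n / l.length)).length = n := by rw [length_power, Nat.div_mul_cancel hd]
  have hset : {x : List α | x.length = n ∧ minrot x = power l (n / l.length)} =
      {x | x ~r power l (n / l.length)} := by
    ext x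
    rw [Set.mem_ofPred_eq, Set.mem_ofPred_eq, minrot_eq_iff_isRotated (selfMinimal_power hsm _)]
    exact ⟨And.right, fun h => ⟨h.perm.length_eq.trans hlen, h⟩⟩
  rw [hset, ncard_setOf_isRotated, minimalPeriod_rotate_power hprim hne hk]

/-- For `n ≥ 1` and a Lyndon word `λ` of length `d` dividing `n`, exactly `d` words
`x` of length `n` satisfy `minrot(x) = λ^(n/d)`. -/
theorem stmt_17 [LinearOrder α] [Fintype α] [Nonempty α]
    (n d : ℕ) (hn : 1 ≤ n) (l : List α) (hl : IsLyndon l)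
    (hld : l.length = d) (hd : d ∣ n) :
    {x : List α | x.length = n ∧ minrot x = power l (n / d)}.ncard = d :=
  stmt_17_general n d hn l hl hld hd

end Lyndon
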